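/- arXiv:2511.10066 — 2 statements merged into one kernel-verified Lean document; each statement's English description precedes it below -/
import Mathlib

section
/- (Spectral bound for QT codes) Let C be a λ-QT code of index ℓ with eigenvalue set Ω̄, and let P ⊆ Ω̄ be nonempty with d_P a defining set bound for the constacyclic code D_P with zero set P. Let V_P = ⋂_{β∈P} V_β be the common eigenspace and 𝔼_P = (V_P)^⊥ ∩ F_q^ℓ the eigencode. Then d(C) ≥ min{ d_P, d(𝔼_P) }. -/
open Polynomial

/-- The `F_q[x]`-submodule of `F_q[x]^ℓ` spanned by the rows of `G`. -/
noncomputable def qtSpan {F : Type*} [Field F] {ℓ : ℕ}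
    (G : Matrix (Fin ℓ) (Fin ℓ) (Polynomial F)) :
    Submodule (Polynomial F) (Fin ℓ → Polynomial F) :=
  Submodule.span (Polynomial F) (Set.range fun i => G i)

/-- The `F`-linear map sending an `m × ℓ` array over `F` to the vector of
column polynomials `c_j(x) = ∑_k c_{k,j} x^k`. -/
noncomputable def toPolyL (F : Type*) [CommSemiring F] (m ℓ : ℕ) :
    (Fin m × Fin ℓ → F) →ₗ[F] (Fin ℓ → Polynomial F) where
  toFun c := fun j => ∑ k : Fin m, Polynomial.C (c (k, j)) * Polynomial.X ^ (k : ℕ)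
  map_add' c c' := by
    funext j
    simp [map_add, add_mul, Finset.sum_add_distrib]
  map_smul' a c := by
    funext j
    simp [Polynomial.smul_eq_C_mul, Finset.mul_sum, mul_assoc]

/-- Minimum Hamming distance of a set of vectors, `∞` if there is no nonzero element. -/
noncomputable def minDist {ι F : Type*} [Fintype ι] [Zero F] [DecidableEq F]
    (S : Set (ι → F)) : ℕ∞ :=
  sInf ((fun u => (hammingNorm u : ℕ∞)) '' {u ∈ S | u ≠ 0})

/-- The eigencode of a set `W ⊆ E^ℓ`: all `F`-vectors orthogonal to every element of `W`. -/
def eigencode {F E : Type*} [Field F] [Field E] [Algebra F E] {ℓ : ℕ}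
    (W : Set (Fin ℓ → E)) : Set (Fin ℓ → F) :=
  {u | ∀ v ∈ W, ∑ j, v j * algebraMap F E (u j) = 0}

/-- The common eigenspace of the eigenvalues in `P`. -/
def commonEig {F E : Type*} [Field F] [Field E] [Algebra F E] {ℓ : ℕ}
    (G : Matrix (Fin ℓ) (Fin ℓ) (Polynomial F)) (P : Finset E) : Set (Fin ℓ → E) :=
  {v | ∀ β ∈ P, (Matrix.of fun r c => Polynomial.aeval β (G r c)).mulVec v = 0}


/-! Write a codeword as an `m × ℓ` array `c` over `F_q`. If every row of `c` lies in the eigencode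
`𝔼_P`, any nonzero row already has weight at least `d(𝔼_P)`. Otherwise some row `c_k` pairs
nontrivially with a common eigenvector `v ∈ V_P`; then the column combination `c v ∈ E^m` is
nonzero, and since `v` kills every row of `G̃(β)`, hence every element of the span of these rows,
`c v` has all `β ∈ P` as zeros, i.e. lies in `D_P`. Its weight is at most the number of nonzero
rows of `c`, hence at most `wt(c)`. -/

section HammingNorm

variable {ι κ F E : Type*} [Fintype ι] [Fintype κ] [Zero F] [DecidableEq F]

theorem minDist_le_hammingNorm {S : Set (ι → F)} {u : ι → F} (hu : u ∈ S) (hu0 : u ≠ 0) :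
    minDist S ≤ hammingNorm u :=
  sInf_le ⟨u, ⟨hu, hu0⟩, rfl⟩

theorem hammingNorm_row_le (c : ι × κ → F) (i : ι) :
    hammingNorm (fun j => c (i, j)) ≤ hammingNorm c :=
  Finset.card_le_card_of_injOn (fun j => (i, j)) (fun j hj => by simpa using hj)
    (fun _ _ _ _ h => (Prod.mk.inj h).2)

theorem hammingNorm_le_of_vanish_on_zero_rows [Zero E] [DecidableEq E] (c : ι × κ → F)
    (g : ι → E) (hg : ∀ i, (∀ j, c (i, j) = 0) → g i = 0) :
    hammingNorm g ≤ hammingNorm c := by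
  classical
  have hsupp : Finset.univ.filter (fun i => g i ≠ 0) ⊆
      (Finset.univ.filter (fun x => c x ≠ 0)).image Prod.fst := by
    intro i hi
    simp only [Finset.mem_filter, Finset.mem_univ, true_and] at hi
    obtain ⟨j, hj⟩ : ∃ j, c (i, j) ≠ 0 := by
      by_contra! h
      exact hi (hg i h)
    exact Finset.mem_image.2 ⟨(i, j), by simpa using hj, rfl⟩
  exact (Finset.card_le_card hsupp).trans Finset.card_image_le

end HammingNorm

section Evaluation

variable {F E : Type*} [Field F] [Field E] [Algebra F E]

theorem aeval_toPolyL (m ℓ : ℕ) (c : Fin m × Fin ℓ → F) (β : E) (j : Fin ℓ) :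
    aeval β (toPolyL F m ℓ c j) = ∑ k : Fin m, algebraMap F E (c (k, j)) * β ^ (k : ℕ) := by
  simp [toPolyL, map_sum]

theorem aeval_dotProduct_eq_zero_of_mem_qtSpan {ℓ : ℕ} {G : Matrix (Fin ℓ) (Fin ℓ) F[X]}
    {β : E} {v : Fin ℓ → E} (hv : (G.map (aeval β)).mulVec v = 0)
    {p : Fin ℓ → F[X]} (hp : p ∈ qtSpan G) :
    (fun j => aeval β (p j)) ⬝ᵥ v = 0 := by
  induction hp using Submodule.span_induction with
  | mem x hx =>
    obtain ⟨i, rfl⟩ := hx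
    exact congrFun hv i
  | zero => simp
  | add x y _ _ hx hy =>
    simp only [dotProduct, Pi.add_apply, map_add, add_mul, Finset.sum_add_distrib] at hx hy ⊢
    rw [hx, hy, add_zero]
  | smul a x _ hx =>
    simp only [dotProduct, Pi.smul_apply, smul_eq_mul, map_mul, mul_assoc, ← Finset.mul_sum]
      at hx ⊢
    rw [hx, mul_zero]

theorem sum_mul_pow_eq_zero_of_mem_commonEig {m ℓ : ℕ} {G : Matrix (Fin ℓ) (Fin ℓ) F[X]}
    {P : Finset E} {c : Fin m × Fin ℓ → F} (hc : toPolyL F m ℓ c ∈ qtSpan G)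
    {v : Fin ℓ → E} (hv : v ∈ commonEig G P) {β : E} (hβ : β ∈ P) :
    ∑ k : Fin m, (∑ j, v j * algebraMap F E (c (k, j))) * β ^ (k : ℕ) = 0 := by
  have h := aeval_dotProduct_eq_zero_of_mem_qtSpan (hv β hβ) hc
  simp only [dotProduct, aeval_toPolyL, Finset.sum_mul] at h
  rw [Finset.sum_comm] at h
  rw [← h]
  refine Finset.sum_congr rfl fun k _ => ?_
  rw [Finset.sum_mul]
  exact Finset.sum_congr rfl fun j _ => by ring

end Evaluation

theorem stmt14_general {F E : Type*} [Field F] [DecidableEq F]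
    [Field E] [Algebra F E] [DecidableEq E]
    (m ℓ : ℕ)
    (G : Matrix (Fin ℓ) (Fin ℓ) (Polynomial F))
    (P : Finset E)
    (dP : ℕ∞)
    (hdP : dP ≤ minDist {c : Fin m → E | ∀ β ∈ P, ∑ i : Fin m, c i * β ^ (i : ℕ) = 0}) :
    min dP (minDist (eigencode (F := F) (commonEig G P))) ≤
      minDist {c : Fin m × Fin ℓ → F | toPolyL F m ℓ c ∈ qtSpan G} := by
  refine le_sInf ?_
  rintro _ ⟨c, ⟨hc, hc0⟩, rfl⟩
  by_cases hrows : ∀ k, (fun j => c (k, j)) ∈ eigencode (F := F) (commonEig G P)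
  · obtain ⟨⟨k, j⟩, hkj⟩ : ∃ x, c x ≠ 0 := Function.ne_iff.1 hc0
    have hrow0 : (fun j => c (k, j)) ≠ 0 := fun h => hkj (congrFun h j)
    calc min dP _ ≤ minDist (eigencode (F := F) (commonEig G P)) := min_le_right _ _
      _ ≤ hammingNorm (fun j => c (k, j)) := minDist_le_hammingNorm (hrows k) hrow0
      _ ≤ hammingNorm c := by exact_mod_cast hammingNorm_row_le c k
  · obtain ⟨k, hk⟩ := not_forall.1 hrows
    obtain ⟨v, hv, hvk⟩ := not_forall₂.1 hk
    set g : Fin m → E := fun k' => ∑ j, v j * algebraMap F E (c (k', j))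
    have hg0 : g ≠ 0 := fun h => hvk (congrFun h k)
    calc min dP _ ≤ dP := min_le_left _ _
      _ ≤ _ := hdP
      _ ≤ hammingNorm g := minDist_le_hammingNorm
          (fun β hβ => sum_mul_pow_eq_zero_of_mem_commonEig hc hv hβ) hg0
      _ ≤ hammingNorm c := by
          exact_mod_cast hammingNorm_le_of_vanish_on_zero_rows c g fun k' h => by simp [g, h]

/-- Spectral bound for quasi-twisted codes. -/
theorem stmt14 {F E : Type*} [Field F] [Fintype F] [DecidableEq F]
    [Field E] [Algebra F E] [DecidableEq E]
    (m ℓ : ℕ) (hm : 0 < m) (hℓ : 0 < ℓ)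
    (hco : Nat.Coprime m (Fintype.card F)) (lam : F) (hlam : lam ≠ 0)
    (G : Matrix (Fin ℓ) (Fin ℓ) (Polynomial F))
    (hupper : ∀ i j, j < i → G i j = 0)
    (hmonic : ∀ j, (G j j).Monic)
    (hdiag : ∀ j, G j j ∣ X ^ m - C lam)
    (hdeg : ∀ i j, i < j → (G i j).degree < (G j j).degree)
    (hfull : ∀ i j, i ≠ j → G j j = X ^ m - C lam → G i j = 0)
    (hK : ∀ j : Fin ℓ, (fun j' => if j' = j then X ^ m - C lam else 0) ∈ qtSpan G)
    (P : Finset E) (hPne : P.Nonempty)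
    (hP : ∀ β ∈ P, Polynomial.aeval β (∏ j, G j j) = 0)
    (dP : ℕ∞)
    (hdP : dP ≤ minDist {c : Fin m → E | ∀ β ∈ P, ∑ i : Fin m, c i * β ^ (i : ℕ) = 0}) :
    min dP (minDist (eigencode (F := F) (commonEig G P))) ≤
      minDist {c : Fin m × Fin ℓ → F | toPolyL F m ℓ c ∈ qtSpan G} :=
  stmt14_general m ℓ G P dP hdP
end

section
/- For each i, the maps φ_i : ⟨θ_i⟩ → E_i, a(x) ↦ a(αξ^{u_i}), and ψ_i : E_i → ⟨θ_i⟩, δ ↦ Σ_{k=0}^{m−1} a_k x^k with a_k = (1/m)·Tr_{E_i/F_q}(δ α^{−k} ξ^{−k u_i}), are mutually inverse F_q-linear field isomorphisms between the minimal λ-constacyclic code ⟨θ_i⟩ ⊆ F_q[x]/⟨x^m−λ⟩ and E_i = F_q(αξ^{u_i}). -/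
/-! Write `γ` for the generator of `E = F⟮β⟯`, where `β = αξ^u` and `f = minpoly F β`. The roots
of `x^m - λ` in `K` are the `ξ^j β`, and those of `f` are the images of `γ` under the
`F`-embeddings `E → K`. As `E/F` is Galois, `Tr(a(γ) γ^{-k})` is the sum of `a(z) z^{-k}` over the
roots `z` of `f`. For `a` in the code, i.e. a multiple of `g = (x^m - λ)/f`, the terms at the other
roots of `x^m - λ` vanish, so this is the sum over all `j < m`, which equals `m a_k` by
orthogonality of the characters `j ↦ ξ^{ij}`. Hence `ψ ∘ φ = id` on the code. Conversely
`g(γ) ≠ 0` because `x^m - λ` is separable, so every `δ ∈ E` is `φ(g q)` for a suitable `q`: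
`φ` is onto and `ψ` is its inverse. -/

open Polynomial

/-- The map `φᵢ : ⟨θᵢ⟩ → Eᵢ`, `a(x) ↦ a(αξ^{uᵢ})`, evaluation at the adjoined root. -/
noncomputable def phiMap {F K : Type*} [Field F] [Field K] [Algebra F K] (β : K)
    (a : Polynomial F) : ↥(IntermediateField.adjoin F {β}) :=
  Polynomial.aeval (IntermediateField.AdjoinSimple.gen F β) a

/-- The map `ψᵢ : Eᵢ → ⟨θᵢ⟩`, `δ ↦ ∑ₖ (1/m)·Tr(δ β^{-k}) xᵏ`. -/
noncomputable def psiMap {F K : Type*} [Field F] [Field K] [Algebra F K] (m : ℕ) (β : K)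
    (δ : ↥(IntermediateField.adjoin F {β})) : Polynomial F :=
  ∑ k : Fin m,
    Polynomial.C ((m : F)⁻¹ *
      Algebra.trace F ↥(IntermediateField.adjoin F {β})
        (δ * (IntermediateField.AdjoinSimple.gen F β)⁻¹ ^ (k : ℕ))) *
      Polynomial.X ^ (k : ℕ)

open IntermediateField

theorem natCast_ne_zero_of_coprime_card {F : Type*} [Field F] [Fintype F] {m : ℕ}
    (hco : m.Coprime (Fintype.card F)) : (m : F) ≠ 0 := by
  intro h
  have := Nat.dvd_gcd (ringChar.dvd h) (ringChar.dvd (FiniteField.cast_card_eq_zero F))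
  rw [hco.gcd_eq_one, Nat.dvd_one] at this
  exact CharP.ringChar_ne_one this

theorem IsPrimitiveRoot.sum_pow_mul_inv_pow {K : Type*} [Field K] {ξ : K} {m i k : ℕ}
    (hξ : IsPrimitiveRoot ξ m) (hi : i < m) (hk : k < m) :
    ∑ j ∈ Finset.range m, (ξ ^ i * (ξ ^ k)⁻¹) ^ j = if i = k then (m : K) else 0 := by
  have hξ0 : ξ ≠ 0 := hξ.ne_zero (by omega)
  split_ifs with hik
  · simp [hik, hξ0]
  · have hne : ξ ^ i * (ξ ^ k)⁻¹ ≠ 1 := by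
      rw [Ne, mul_inv_eq_one₀ (pow_ne_zero _ hξ0)]
      exact fun h => hik (hξ.pow_inj hi hk h)
    have hpow : (ξ ^ i * (ξ ^ k)⁻¹) ^ m = 1 := by
      rw [mul_pow, inv_pow, ← pow_mul, ← pow_mul, mul_comm i, mul_comm k, pow_mul, pow_mul,
        hξ.pow_eq_one, one_pow, one_pow, inv_one, mul_one]
    rw [geom_sum_eq hne, hpow, sub_self, zero_div]

theorem IsPrimitiveRoot.sum_aeval_mul_inv_pow {R K : Type*} [CommSemiring R] [Field K]
    [Algebra R K] {ξ β : K} {m k : ℕ} (hξ : IsPrimitiveRoot ξ m) (hβ : β ≠ 0) {a : R[X]}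
    (ha : a.natDegree < m) (hk : k < m) :
    ∑ j ∈ Finset.range m, aeval (ξ ^ j * β) a * (ξ ^ j * β)⁻¹ ^ k
      = m * algebraMap R K (a.coeff k) := by
  have hterm : ∀ i j : ℕ, (ξ ^ j * β) ^ i * (ξ ^ j * β)⁻¹ ^ k
      = β ^ i * (β ^ k)⁻¹ * (ξ ^ i * (ξ ^ k)⁻¹) ^ j := by
    intro i j
    rw [mul_inv, mul_pow, mul_pow, mul_pow, inv_pow, inv_pow, inv_pow, ← pow_mul, ← pow_mul,
      ← pow_mul, ← pow_mul, mul_comm i j, mul_comm k j]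
    ring
  calc ∑ j ∈ Finset.range m, aeval (ξ ^ j * β) a * (ξ ^ j * β)⁻¹ ^ k
      = ∑ i ∈ Finset.range m, a.coeff i •
          (β ^ i * (β ^ k)⁻¹ * ∑ j ∈ Finset.range m, (ξ ^ i * (ξ ^ k)⁻¹) ^ j) := by
        simp_rw [aeval_eq_sum_range' ha, Finset.sum_mul, smul_mul_assoc, Finset.mul_sum,
          hterm, Finset.smul_sum]
        exact Finset.sum_comm
    _ = m * algebraMap R K (a.coeff k) := by
        rw [Finset.sum_eq_single_of_mem k (Finset.mem_range.mpr hk)]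
        · rw [hξ.sum_pow_mul_inv_pow hk hk, if_pos rfl, mul_inv_cancel₀ (pow_ne_zero _ hβ),
            one_mul, Algebra.smul_def, mul_comm]
        · intro i hi hik
          rw [hξ.sum_pow_mul_inv_pow (Finset.mem_range.mp hi) hk, if_neg hik, mul_zero,
            smul_zero]

theorem Algebra.algebraMap_trace_eq_sum_algHom {F E K : Type*} [Field F] [Field E] [Field K]
    [Algebra F E] [Algebra F K] [Algebra E K] [IsScalarTower F E K] [FiniteDimensional F E]
    [IsGalois F E] (x : E) :
    algebraMap F K (Algebra.trace F E x) = ∑ τ : E →ₐ[F] K, τ x := by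
  rw [IsScalarTower.algebraMap_apply F E K, trace_eq_sum_automorphisms, map_sum]
  exact Fintype.sum_equiv (Normal.algHomEquivAut F K E).symm _ _ fun σ => rfl

theorem IntermediateField.sum_algHom_adjoin_eq_sum_aroots {F K M : Type*} [Field F] [Field K]
    [Algebra F K] [AddCommMonoid M] {β : K} [FiniteDimensional F F⟮β⟯] (hβ : IsSeparable F β)
    (h : K → M) :
    ∑ τ : F⟮β⟯ →ₐ[F] K, h (τ (AdjoinSimple.gen F β)) = (((minpoly F β).aroots K).map h).sum := by
  classical
  let pb := adjoin.powerBasis hβ.isIntegral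
  have hgen : pb.gen = AdjoinSimple.gen F β := adjoin.powerBasis_gen hβ.isIntegral
  have hmin : minpoly F pb.gen = minpoly F β := by rw [hgen, minpoly_gen]
  have hnodup : ((minpoly F β).aroots K).Nodup := nodup_roots ((separable_map _).mpr hβ)
  rw [Fintype.sum_equiv pb.liftEquiv' _ (fun y => h y)
      (fun τ => by rw [PowerBasis.liftEquiv'_apply_coe, hgen]),
    Finset.sum_mem_multiset _ _ h (fun _ => rfl), hmin, Finset.sum_eq_multiset_sum,
    Multiset.toFinset_val, Multiset.dedup_eq_self.mpr hnodup]

theorem Polynomial.sum_map_aroots_mul_of_forall_aroots_eq_zero {F K M : Type*} [Field F]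
    [Field K] [Algebra F K] [AddCommMonoid M] {f g : F[X]} (hfg : f * g ≠ 0) {h : K → M}
    (hg : ∀ z ∈ g.aroots K, h z = 0) :
    (((f * g).aroots K).map h).sum = ((f.aroots K).map h).sum := by
  have hzero : ((g.aroots K).map h).sum = 0 :=
    Multiset.sum_eq_zero fun _ hx => by
      obtain ⟨z, hz, rfl⟩ := Multiset.mem_map.mp hx
      exact hg z hz
  rw [aroots_mul hfg, Multiset.map_add, Multiset.sum_add, hzero, add_zero]

section ConstacyclicCode

variable {F K : Type*} [Field F] [Field K] [Algebra F K] {m : ℕ} {lam : F} {β : K}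

theorem psiMap_add (δ δ' : F⟮β⟯) : psiMap m β (δ + δ') = psiMap m β δ + psiMap m β δ' := by
  simp only [psiMap, add_mul, map_add, mul_add, ← Finset.sum_add_distrib]

theorem psiMap_smul (c : F) (δ : F⟮β⟯) : psiMap m β (c • δ) = C c * psiMap m β δ := by
  simp only [psiMap, Finset.mul_sum, smul_mul_assoc, map_smul, smul_eq_mul, ← mul_assoc,
    mul_left_comm _ c, map_mul]

theorem phiMap_modByMonic (hβm : β ^ m = algebraMap F K lam) (a : F[X]) :
    phiMap β (a %ₘ (X ^ m - C lam)) = phiMap β a := by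
  refine aeval_modByMonic_eq_self_of_root ?_
  apply (algebraMap F⟮β⟯ K).injective
  simp [hβm]

theorem isSeparable_of_pow_eq (hmF : (m : F) ≠ 0) (hlam : lam ≠ 0)
    (hβm : β ^ m = algebraMap F K lam) : IsSeparable F β :=
  (separable_X_pow_sub_C lam hmF hlam).of_dvd (minpoly.dvd F β (by simp [hβm]))

theorem trace_aeval_gen_mul_inv_pow [Finite F] (hmF : (m : F) ≠ 0) (hlam : lam ≠ 0)
    {ξ : K} (hξ : IsPrimitiveRoot ξ m) (hβm : β ^ m = algebraMap F K lam) {g : F[X]}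
    (hfg : minpoly F β * g = X ^ m - C lam) {a : F[X]} (ha : a.natDegree < m) (hga : g ∣ a)
    {k : ℕ} (hk : k < m) :
    Algebra.trace F F⟮β⟯ (aeval (AdjoinSimple.gen F β) a * (AdjoinSimple.gen F β)⁻¹ ^ k)
      = m * a.coeff k := by
  have hsep := isSeparable_of_pow_eq hmF hlam hβm
  have hm0 : m ≠ 0 := by rintro rfl; exact hmF Nat.cast_zero
  have hβ0 : β ≠ 0 := by
    rintro rfl
    exact hlam ((map_eq_zero (algebraMap F K)).mp (by rw [← hβm, zero_pow hm0]))
  have : FiniteDimensional F F⟮β⟯ := adjoin.finiteDimensional hsep.isIntegral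
  have : Finite F⟮β⟯ := Module.finite_of_finite F
  let h : K → K := fun z => aeval z a * z⁻¹ ^ k
  apply (algebraMap F K).injective
  calc algebraMap F K (Algebra.trace F F⟮β⟯ _)
      = ∑ τ : F⟮β⟯ →ₐ[F] K, h (τ (AdjoinSimple.gen F β)) := by
        rw [Algebra.algebraMap_trace_eq_sum_algHom]
        simp only [h, map_mul, map_pow, map_inv₀, aeval_algHom_apply]
    _ = (((minpoly F β).aroots K).map h).sum := sum_algHom_adjoin_eq_sum_aroots hsep h
    _ = (((X ^ m - C lam).aroots K).map h).sum := by
        rw [← hfg]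
        refine (sum_map_aroots_mul_of_forall_aroots_eq_zero ?_ fun z hz => ?_).symm
        · rw [hfg]
          exact X_pow_sub_C_ne_zero (Nat.pos_of_ne_zero hm0) lam
        · obtain ⟨c, rfl⟩ := hga
          simp [h, (mem_aroots.mp hz).2]
    _ = ∑ j ∈ Finset.range m, h (ξ ^ j * β) := by
        rw [aroots_def, Polynomial.map_sub, Polynomial.map_pow, map_X, map_C, ← nthRoots,
          hξ.nthRoots_eq hβm, Multiset.map_map]
        rfl
    _ = algebraMap F K (m * a.coeff k) := by
        rw [hξ.sum_aeval_mul_inv_pow hβ0 ha hk, map_mul, map_natCast]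

theorem psiMap_phiMap [Finite F] (hmF : (m : F) ≠ 0) (hlam : lam ≠ 0)
    {ξ : K} (hξ : IsPrimitiveRoot ξ m) (hβm : β ^ m = algebraMap F K lam) {g : F[X]}
    (hfg : minpoly F β * g = X ^ m - C lam) {a : F[X]} (ha : a.degree < m) (hga : g ∣ a) :
    psiMap m β (phiMap β a) = a := by
  have hnd : a.natDegree < m := by
    rcases eq_or_ne a 0 with rfl | ha0
    · exact Nat.pos_of_ne_zero (by rintro rfl; exact hmF Nat.cast_zero)
    · exact (natDegree_lt_iff_degree_lt ha0).mpr ha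
  calc psiMap m β (phiMap β a) = ∑ k : Fin m, C (a.coeff k) * X ^ (k : ℕ) :=
        Finset.sum_congr rfl fun k _ => by
          rw [phiMap, trace_aeval_gen_mul_inv_pow hmF hlam hξ hβm hfg hnd hga k.isLt,
            inv_mul_cancel_left₀ hmF]
    _ = a := (sum_fin (fun i c => C c * X ^ i) (by simp) ha).trans a.sum_C_mul_X_pow_eq

theorem exists_phiMap_eq (hmF : (m : F) ≠ 0) (hlam : lam ≠ 0)
    (hβm : β ^ m = algebraMap F K lam) {g : F[X]} (hfg : minpoly F β * g = X ^ m - C lam)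
    (δ : F⟮β⟯) : ∃ a : F[X], a.degree < m ∧ g ∣ a ∧ phiMap β a = δ := by
  have hint := (isSeparable_of_pow_eq hmF hlam hβm).isIntegral
  have hgγ : aeval (AdjoinSimple.gen F β) g ≠ 0 := by
    intro h
    have hdvd : minpoly F β ∣ g := minpoly.dvd F β <| by
      rw [← AdjoinSimple.algebraMap_gen F β, aeval_algebraMap_apply, h, map_zero]
    obtain ⟨c, rfl⟩ := hdvd
    refine minpoly.not_isUnit F β ((separable_X_pow_sub_C lam hmF hlam).squarefree _ ⟨c, ?_⟩)
    rw [← hfg, mul_assoc]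
  let pb := adjoin.powerBasis hint
  obtain ⟨q, hq, hδ⟩ := pb.exists_eq_aeval (δ * (aeval (AdjoinSimple.gen F β) g)⁻¹)
  have hdim : pb.dim = (minpoly F β).natDegree := by
    rw [← pb.natDegree_minpoly, adjoin.powerBasis_gen, minpoly_gen]
  refine ⟨g * q, degree_le_natDegree.trans_lt ?_, dvd_mul_right g q, ?_⟩
  · have hg0 : g ≠ 0 := by
      rintro rfl
      exact hgγ (map_zero _)
    have hlt : (g * q).natDegree < m := by
      calc (g * q).natDegree ≤ g.natDegree + q.natDegree := natDegree_mul_le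
        _ < g.natDegree + (minpoly F β).natDegree := by omega
        _ = m := by
          rw [add_comm, ← natDegree_mul (minpoly.ne_zero hint) hg0, hfg, natDegree_X_pow_sub_C]
    exact_mod_cast hlt
  · rw [phiMap, map_mul, ← adjoin.powerBasis_gen hint, ← hδ, adjoin.powerBasis_gen hint]
    field_simp

end ConstacyclicCode

theorem stmt19_general {F K : Type*} [Field F] [Fintype F] [Field K] [Algebra F K]
    (m r u : ℕ) (hm : 0 < m) (hco : Nat.Coprime m (Fintype.card F))
    (lam : F) (hlam : lam ≠ 0) (hr : orderOf lam = r)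
    (α : K) (hα : IsPrimitiveRoot α (r * m)) (hαm : α ^ m = algebraMap F K lam)
    (f : Polynomial F) (hirr : Irreducible f) (hfm : f.Monic)
    (hfd : f ∣ X ^ m - C lam)
    (hu : Polynomial.aeval (α * (α ^ r) ^ u) f = 0) :
    (∀ a : Polynomial F, a.degree < m → ((X ^ m - C lam) /ₘ f) ∣ a →
        psiMap m (α * (α ^ r) ^ u) (phiMap (α * (α ^ r) ^ u) a) = a) ∧
    (∀ δ : ↥(IntermediateField.adjoin F {α * (α ^ r) ^ u}),
        (psiMap m (α * (α ^ r) ^ u) δ).degree < m ∧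
        ((X ^ m - C lam) /ₘ f) ∣ psiMap m (α * (α ^ r) ^ u) δ ∧
        phiMap (α * (α ^ r) ^ u) (psiMap m (α * (α ^ r) ^ u) δ) = δ) ∧
    (∀ δ δ' : ↥(IntermediateField.adjoin F {α * (α ^ r) ^ u}),
        psiMap m (α * (α ^ r) ^ u) (δ + δ') =
          psiMap m (α * (α ^ r) ^ u) δ + psiMap m (α * (α ^ r) ^ u) δ') ∧
    (∀ (c : F) (δ : ↥(IntermediateField.adjoin F {α * (α ^ r) ^ u})),
        psiMap m (α * (α ^ r) ^ u) (c • δ) = C c * psiMap m (α * (α ^ r) ^ u) δ) ∧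
    (∀ a b : Polynomial F, a.degree < m → ((X ^ m - C lam) /ₘ f) ∣ a →
        b.degree < m → ((X ^ m - C lam) /ₘ f) ∣ b →
        phiMap (α * (α ^ r) ^ u) ((a * b) %ₘ (X ^ m - C lam)) =
          phiMap (α * (α ^ r) ^ u) a * phiMap (α * (α ^ r) ^ u) b) := by
  have hmF := natCast_ne_zero_of_coprime_card hco
  have hr0 : 0 < r := hr ▸ (isOfFinOrder_iff_pow_eq_one.mpr ⟨_, Nat.sub_pos_of_lt
    Fintype.one_lt_card, FiniteField.pow_card_sub_one_eq_one lam hlam⟩).orderOf_pos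
  have hξ : IsPrimitiveRoot (α ^ r) m := hα.pow (Nat.mul_pos hr0 hm) rfl
  have hβm : (α * (α ^ r) ^ u) ^ m = algebraMap F K lam := by
    rw [mul_pow, hαm, ← pow_mul, pow_mul', hξ.pow_eq_one, one_pow, mul_one]
  have hfg : minpoly F (α * (α ^ r) ^ u) * ((X ^ m - C lam) /ₘ f) = X ^ m - C lam := by
    rw [← minpoly.eq_of_irreducible_of_monic hirr hu hfm]
    have := modByMonic_add_div (X ^ m - C lam) f
    rwa [(modByMonic_eq_zero_iff_dvd hfm).mpr hfd, zero_add] at this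
  refine ⟨fun a ha hga => psiMap_phiMap hmF hlam hξ hβm hfg ha hga, fun δ => ?_, psiMap_add,
    psiMap_smul, fun a b _ _ _ _ => (phiMap_modByMonic hβm (a * b)).trans (map_mul _ a b)⟩
  obtain ⟨a, ha, hga, rfl⟩ := exists_phiMap_eq hmF hlam hβm hfg δ
  rw [psiMap_phiMap hmF hlam hξ hβm hfg ha hga]
  exact ⟨ha, hga, rfl⟩

/-- The maps `φᵢ` and `ψᵢ` are mutually inverse `F_q`-linear field isomorphisms
between the minimal `λ`-constacyclic code with check polynomial `fᵢ`
(the multiples of `(x^m - λ)/fᵢ` of degree `< m`) and `Eᵢ = F_q(αξ^{uᵢ})`. -/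
theorem stmt19 {F K : Type*} [Field F] [Fintype F] [Field K] [Algebra F K]
    (m r u : ℕ) (hm : 0 < m) (hco : Nat.Coprime m (Fintype.card F))
    (lam : F) (hlam : lam ≠ 0) (hr : orderOf lam = r)
    (α : K) (hα : IsPrimitiveRoot α (r * m)) (hαm : α ^ m = algebraMap F K lam)
    (f : Polynomial F) (hirr : Irreducible f) (hfm : f.Monic)
    (hfd : f ∣ X ^ m - C lam)
    (hu : Polynomial.aeval (α * (α ^ r) ^ u) f = 0)
    (humin : ∀ u' < u, Polynomial.aeval (α * (α ^ r) ^ u') f ≠ 0) :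
    (∀ a : Polynomial F, a.degree < m → ((X ^ m - C lam) /ₘ f) ∣ a →
        psiMap m (α * (α ^ r) ^ u) (phiMap (α * (α ^ r) ^ u) a) = a) ∧
    (∀ δ : ↥(IntermediateField.adjoin F {α * (α ^ r) ^ u}),
        (psiMap m (α * (α ^ r) ^ u) δ).degree < m ∧
        ((X ^ m - C lam) /ₘ f) ∣ psiMap m (α * (α ^ r) ^ u) δ ∧
        phiMap (α * (α ^ r) ^ u) (psiMap m (α * (α ^ r) ^ u) δ) = δ) ∧
    (∀ δ δ' : ↥(IntermediateField.adjoin F {α * (α ^ r) ^ u}),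
        psiMap m (α * (α ^ r) ^ u) (δ + δ') =
          psiMap m (α * (α ^ r) ^ u) δ + psiMap m (α * (α ^ r) ^ u) δ') ∧
    (∀ (c : F) (δ : ↥(IntermediateField.adjoin F {α * (α ^ r) ^ u})),
        psiMap m (α * (α ^ r) ^ u) (c • δ) = C c * psiMap m (α * (α ^ r) ^ u) δ) ∧
    (∀ a b : Polynomial F, a.degree < m → ((X ^ m - C lam) /ₘ f) ∣ a →
        b.degree < m → ((X ^ m - C lam) /ₘ f) ∣ b →
        phiMap (α * (α ^ r) ^ u) ((a * b) %ₘ (X ^ m - C lam)) =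
          phiMap (α * (α ^ r) ^ u) a * phiMap (α * (α ^ r) ^ u) b) :=
  stmt19_general m r u hm hco lam hlam hr α hα hαm f hirr hfm hfd hu
end
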